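/- arXiv:1706.09599 — 2 statements merged into one kernel-verified Lean document; each statement's English description precedes it below -/
import Mathlib

section
/- Let n, m ∈ ℕ, T > 0, L̂ > 0, L_κ ≥ 0, M_V ≥ 0, M_l > 0, and x₀ ∈ ℝⁿ. Let x : [0,T] → ℝⁿ and u : [0,T] → ℝᵐ be continuous functions satisfying ‖x(τ)‖ ≤ ‖x₀‖·exp(L̂τ) and ‖u(τ)‖ ≤ L_κ·‖x(τ)‖ for all τ ∈ [0,T]. Let V : ℝⁿ → ℝ satisfy V(y) ≤ M_V·‖y‖² for all y, and let l : ℝⁿ × ℝᵐ → ℝ satisfy l(y,w) ≤ M_l·(‖y‖² + ‖w‖²) for all (y,w). Then V(x(T)) + ∫₀ᵀ l(x(τ), u(τ)) dτ ≤ M_J·‖x₀‖², where M_J := M_V·exp(2L̂T) + (M_l/(2L̂))·(exp(2L̂T)·(1 + L_κ²) − 1 − L_κ²). -/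
/-! Squaring the growth bound gives `‖x τ‖² ≤ ‖x₀‖² e^{2L̂τ}`, which bounds the terminal cost;
with the feedback bound the running cost is dominated by `M_l (1 + L_κ²) ‖x₀‖² e^{2L̂τ}`,
whose integral over `[0, T]` is the second summand of `M_J ‖x₀‖²`. -/

open Real Set intervalIntegral

theorem integral_exp_mul {c : ℝ} (hc : c ≠ 0) (a b : ℝ) :
    ∫ τ in a..b, exp (c * τ) = (exp (c * b) - exp (c * a)) / c := by
  rw [integral_comp_mul_left (fun τ => exp τ) hc, integral_exp, smul_eq_mul, inv_mul_eq_div]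

theorem sq_le_sq_mul_exp_two_mul {r a L τ : ℝ} (hr : 0 ≤ r) (h : r ≤ a * exp (L * τ)) :
    r ^ 2 ≤ a ^ 2 * exp (2 * L * τ) :=
  calc r ^ 2 ≤ (a * exp (L * τ)) ^ 2 := pow_le_pow_left₀ hr h 2
    _ = a ^ 2 * exp (2 * L * τ) := by rw [mul_pow, ← exp_nat_mul]; ring_nf

theorem apply_le_of_quadratic_bound_of_norm_le_mul {E F : Type*} [SeminormedAddCommGroup E]
    [SeminormedAddCommGroup F] {l : E × F → ℝ} {M k : ℝ} (hM : 0 ≤ M)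
    (hl : ∀ y w, l (y, w) ≤ M * (‖y‖ ^ 2 + ‖w‖ ^ 2)) {y : E} {w : F} (hw : ‖w‖ ≤ k * ‖y‖) :
    l (y, w) ≤ M * (1 + k ^ 2) * ‖y‖ ^ 2 := by
  have hw2 : ‖w‖ ^ 2 ≤ k ^ 2 * ‖y‖ ^ 2 := by
    rw [← mul_pow]; exact pow_le_pow_left₀ (norm_nonneg w) hw 2
  calc l (y, w) ≤ M * (‖y‖ ^ 2 + ‖w‖ ^ 2) := hl y w
    _ ≤ M * ((1 + k ^ 2) * ‖y‖ ^ 2) := by gcongr; linarith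
    _ = M * (1 + k ^ 2) * ‖y‖ ^ 2 := by ring

theorem integral_le_of_le_mul_exp {f : ℝ → ℝ} {C c T : ℝ} (hc : c ≠ 0) (hT : 0 ≤ T)
    (hf : IntervalIntegrable f MeasureTheory.volume 0 T)
    (hle : ∀ τ ∈ Icc 0 T, f τ ≤ C * exp (c * τ)) :
    ∫ τ in 0..T, f τ ≤ C * ((exp (c * T) - 1) / c) := by
  have hexp : IntervalIntegrable (fun τ => C * exp (c * τ)) MeasureTheory.volume 0 T :=
    (by fun_prop : Continuous fun τ => C * exp (c * τ)).intervalIntegrable 0 T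
  calc ∫ τ in 0..T, f τ ≤ ∫ τ in 0..T, C * exp (c * τ) := integral_mono_on hT hf hexp hle
    _ = C * ((exp (c * T) - 1) / c) := by
      rw [integral_const_mul, integral_exp_mul hc, mul_zero, exp_zero]

theorem cost_quadratic_upper_bound_general
    (n m : ℕ) (T Lhat Lk MV Ml : ℝ)
    (hT : 0 < T) (hLhat : 0 < Lhat) (hMV : 0 ≤ MV) (hMl : 0 < Ml)
    (x₀ : EuclideanSpace ℝ (Fin n))
    (x : ℝ → EuclideanSpace ℝ (Fin n)) (u : ℝ → EuclideanSpace ℝ (Fin m))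
    (hxb : ∀ τ ∈ Set.Icc (0 : ℝ) T, ‖x τ‖ ≤ ‖x₀‖ * Real.exp (Lhat * τ))
    (hub : ∀ τ ∈ Set.Icc (0 : ℝ) T, ‖u τ‖ ≤ Lk * ‖x τ‖)
    (V : EuclideanSpace ℝ (Fin n) → ℝ)
    (hV : ∀ y, V y ≤ MV * ‖y‖ ^ 2)
    (l : EuclideanSpace ℝ (Fin n) × EuclideanSpace ℝ (Fin m) → ℝ)
    (hl : ∀ y w, l (y, w) ≤ Ml * (‖y‖ ^ 2 + ‖w‖ ^ 2))
    (hint : IntervalIntegrable (fun τ => l (x τ, u τ)) MeasureTheory.volume 0 T) :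
    V (x T) + ∫ τ in (0 : ℝ)..T, l (x τ, u τ) ≤
      (MV * Real.exp (2 * Lhat * T) +
        Ml / (2 * Lhat) * (Real.exp (2 * Lhat * T) * (1 + Lk ^ 2) - 1 - Lk ^ 2)) * ‖x₀‖ ^ 2 := by
  have hx2 : ∀ τ ∈ Icc 0 T, ‖x τ‖ ^ 2 ≤ ‖x₀‖ ^ 2 * exp (2 * Lhat * τ) := fun τ hτ =>
    sq_le_sq_mul_exp_two_mul (norm_nonneg _) (hxb τ hτ)
  have hterminal : V (x T) ≤ MV * (‖x₀‖ ^ 2 * exp (2 * Lhat * T)) :=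
    (hV _).trans (by gcongr; exact hx2 T ⟨hT.le, le_rfl⟩)
  have hrunning : ∫ τ in 0..T, l (x τ, u τ) ≤
      Ml * (1 + Lk ^ 2) * ‖x₀‖ ^ 2 * ((exp (2 * Lhat * T) - 1) / (2 * Lhat)) := by
    refine integral_le_of_le_mul_exp (by positivity) hT.le hint fun τ hτ => ?_
    calc l (x τ, u τ) ≤ Ml * (1 + Lk ^ 2) * ‖x τ‖ ^ 2 :=
          apply_le_of_quadratic_bound_of_norm_le_mul hMl.le hl (hub τ hτ)
      _ ≤ Ml * (1 + Lk ^ 2) * (‖x₀‖ ^ 2 * exp (2 * Lhat * τ)) := by gcongr; exact hx2 τ hτ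
      _ = Ml * (1 + Lk ^ 2) * ‖x₀‖ ^ 2 * exp (2 * Lhat * τ) := by ring
  have hM : Ml * (1 + Lk ^ 2) * ‖x₀‖ ^ 2 * ((exp (2 * Lhat * T) - 1) / (2 * Lhat)) =
      Ml / (2 * Lhat) * (exp (2 * Lhat * T) * (1 + Lk ^ 2) - 1 - Lk ^ 2) * ‖x₀‖ ^ 2 := by
    ring
  linarith

/-- Quadratic upper bound `J*(x₀) ≤ M_J ‖x₀‖²` on the MPC cost functional
`J = V(x(T)) + ∫₀ᵀ l(x(τ),u(τ)) dτ`, where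
`M_J = M_V e^{2L̂T} + (M_l/(2L̂))(e^{2L̂T}(1+L_κ²) − 1 − L_κ²)`. -/
theorem cost_quadratic_upper_bound
    (n m : ℕ) (T Lhat Lk MV Ml : ℝ)
    (hT : 0 < T) (hLhat : 0 < Lhat) (hLk : 0 ≤ Lk) (hMV : 0 ≤ MV) (hMl : 0 < Ml)
    (x₀ : EuclideanSpace ℝ (Fin n))
    (x : ℝ → EuclideanSpace ℝ (Fin n)) (u : ℝ → EuclideanSpace ℝ (Fin m))
    (hx : ContinuousOn x (Set.Icc 0 T)) (hu : ContinuousOn u (Set.Icc 0 T))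
    (hxb : ∀ τ ∈ Set.Icc (0 : ℝ) T, ‖x τ‖ ≤ ‖x₀‖ * Real.exp (Lhat * τ))
    (hub : ∀ τ ∈ Set.Icc (0 : ℝ) T, ‖u τ‖ ≤ Lk * ‖x τ‖)
    (V : EuclideanSpace ℝ (Fin n) → ℝ)
    (hV : ∀ y, V y ≤ MV * ‖y‖ ^ 2)
    (l : EuclideanSpace ℝ (Fin n) × EuclideanSpace ℝ (Fin m) → ℝ)
    (hl : ∀ y w, l (y, w) ≤ Ml * (‖y‖ ^ 2 + ‖w‖ ^ 2))
    (hint : IntervalIntegrable (fun τ => l (x τ, u τ)) MeasureTheory.volume 0 T) :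
    V (x T) + ∫ τ in (0 : ℝ)..T, l (x τ, u τ) ≤
      (MV * Real.exp (2 * Lhat * T) +
        Ml / (2 * Lhat) * (Real.exp (2 * Lhat * T) * (1 + Lk ^ 2) - 1 - Lk ^ 2)) * ‖x₀‖ ^ 2 :=
  cost_quadratic_upper_bound_general n m T Lhat Lk MV Ml hT hLhat hMV hMl x₀ x u hxb hub V hV l hl
    hint
end

section
/- Let n, m ∈ ℕ, T > 0, 0 < Δt ≤ T, L̂ > 0, m_l > 0, M_J > 0, and x₀ ∈ ℝⁿ. Let x : [0,T] → ℝⁿ and u : [0,T] → ℝᵐ be continuous with ‖x(τ)‖ ≥ ‖x₀‖·exp(−L̂τ) for all τ ∈ [0,T], let l : ℝⁿ × ℝᵐ → ℝ satisfy l(y,w) ≥ m_l·‖y‖² for all (y,w), and let J be a real number with 0 ≤ J ≤ M_J·‖x₀‖². Then ∫₀^{Δt} l(x(τ), u(τ)) dτ ≥ a·J, where a := m_l·(1 − exp(−2L̂Δt)) / (2L̂·M_J). -/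
/-!
On `[0, Δt]` the stage cost is at least `m_l ‖x τ‖² ≥ m_l ‖x₀‖² e^{-2L̂τ}`, whose integral is
`m_l ‖x₀‖² (1 - e^{-2L̂Δt}) / (2L̂)`; since `J ≤ M_J ‖x₀‖²`, this is at least `a J`.
-/

open Real intervalIntegral

theorem integral_exp_neg_mul {k : ℝ} (hk : k ≠ 0) (t : ℝ) :
    ∫ τ in (0 : ℝ)..t, exp (-k * τ) = (1 - exp (-k * t)) / k := by
  rw [integral_comp_mul_left exp (neg_ne_zero.mpr hk), integral_exp, mul_zero, exp_zero,
    smul_eq_mul]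
  field_simp
  ring

theorem le_integral_of_exp_decay_le {f : ℝ → ℝ} {C k t : ℝ} (hk : k ≠ 0) (ht : 0 ≤ t)
    (hf : IntervalIntegrable f MeasureTheory.volume 0 t)
    (hbound : ∀ τ ∈ Set.Icc 0 t, C * exp (-k * τ) ≤ f τ) :
    C * ((1 - exp (-k * t)) / k) ≤ ∫ τ in (0 : ℝ)..t, f τ := by
  have hexp_int : IntervalIntegrable (fun τ => C * exp (-k * τ)) MeasureTheory.volume 0 t :=
    (by fun_prop : Continuous fun τ => C * exp (-k * τ)).intervalIntegrable 0 t
  calc C * ((1 - exp (-k * t)) / k)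
      = ∫ τ in (0 : ℝ)..t, C * exp (-k * τ) := by
        rw [integral_const_mul, integral_exp_neg_mul hk]
    _ ≤ ∫ τ in (0 : ℝ)..t, f τ := integral_mono_on ht hexp_int hf hbound

theorem sq_mul_exp_le_sq_of_mul_exp_le {r s L τ : ℝ} (hr : 0 ≤ r)
    (h : r * exp (-L * τ) ≤ s) :
    r ^ 2 * exp (-(2 * L) * τ) ≤ s ^ 2 := by
  have hsq : (r * exp (-L * τ)) ^ 2 = r ^ 2 * exp (-(2 * L) * τ) := by
    rw [mul_pow, ← exp_nat_mul]
    ring_nf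
  rw [← hsq]
  exact pow_le_pow_left₀ (by positivity) h 2

theorem integral_cost_lower_bound_sampling_interval_general
    (n m : ℕ) (T Δt Lhat ml MJ : ℝ)
    (hΔt : 0 < Δt) (hΔtT : Δt ≤ T) (hLhat : 0 < Lhat)
    (hml : 0 < ml) (hMJ : 0 < MJ)
    (x₀ : EuclideanSpace ℝ (Fin n))
    (x : ℝ → EuclideanSpace ℝ (Fin n)) (u : ℝ → EuclideanSpace ℝ (Fin m))
    (hxb : ∀ τ ∈ Set.Icc (0 : ℝ) T, ‖x₀‖ * Real.exp (-Lhat * τ) ≤ ‖x τ‖)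
    (l : EuclideanSpace ℝ (Fin n) × EuclideanSpace ℝ (Fin m) → ℝ)
    (hl : ∀ y w, ml * ‖y‖ ^ 2 ≤ l (y, w))
    (J : ℝ) (hJ : J ≤ MJ * ‖x₀‖ ^ 2)
    (hint : IntervalIntegrable (fun τ => l (x τ, u τ)) MeasureTheory.volume 0 Δt) :
    ml * (1 - Real.exp (-2 * Lhat * Δt)) / (2 * Lhat * MJ) * J ≤
      ∫ τ in (0 : ℝ)..Δt, l (x τ, u τ) := by
  have hcost : ∀ τ ∈ Set.Icc 0 Δt,
      ml * ‖x₀‖ ^ 2 * exp (-(2 * Lhat) * τ) ≤ l (x τ, u τ) := fun τ hτ =>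
    calc ml * ‖x₀‖ ^ 2 * exp (-(2 * Lhat) * τ)
        = ml * (‖x₀‖ ^ 2 * exp (-(2 * Lhat) * τ)) := mul_assoc _ _ _
      _ ≤ ml * ‖x τ‖ ^ 2 := mul_le_mul_of_nonneg_left
          (sq_mul_exp_le_sq_of_mul_exp_le (norm_nonneg x₀)
            (hxb τ ⟨hτ.1, hτ.2.trans hΔtT⟩)) hml.le
      _ ≤ l (x τ, u τ) := hl _ _
  have hdecay : 0 ≤ 1 - exp (-2 * Lhat * Δt) := by
    rw [sub_nonneg, exp_le_one_iff]
    nlinarith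
  calc ml * (1 - exp (-2 * Lhat * Δt)) / (2 * Lhat * MJ) * J
      ≤ ml * (1 - exp (-2 * Lhat * Δt)) / (2 * Lhat * MJ) * (MJ * ‖x₀‖ ^ 2) :=
        mul_le_mul_of_nonneg_left hJ (by positivity)
    _ = ml * ‖x₀‖ ^ 2 * ((1 - exp (-(2 * Lhat) * Δt)) / (2 * Lhat)) := by
        field_simp
    _ ≤ ∫ τ in (0 : ℝ)..Δt, l (x τ, u τ) :=
        le_integral_of_exp_decay_le (by positivity) hΔt.le hint hcost

/-- The cost accumulated over one sampling interval `[0,Δt]` is at least the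
fraction `a = m_l (1 − e^{−2L̂Δt})/(2 L̂ M_J)` of the optimal cost `J ≤ M_J‖x₀‖²`. -/
theorem integral_cost_lower_bound_sampling_interval
    (n m : ℕ) (T Δt Lhat ml MJ : ℝ)
    (hT : 0 < T) (hΔt : 0 < Δt) (hΔtT : Δt ≤ T) (hLhat : 0 < Lhat)
    (hml : 0 < ml) (hMJ : 0 < MJ)
    (x₀ : EuclideanSpace ℝ (Fin n))
    (x : ℝ → EuclideanSpace ℝ (Fin n)) (u : ℝ → EuclideanSpace ℝ (Fin m))
    (hx : ContinuousOn x (Set.Icc 0 T)) (hu : ContinuousOn u (Set.Icc 0 T))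
    (hxb : ∀ τ ∈ Set.Icc (0 : ℝ) T, ‖x₀‖ * Real.exp (-Lhat * τ) ≤ ‖x τ‖)
    (l : EuclideanSpace ℝ (Fin n) × EuclideanSpace ℝ (Fin m) → ℝ)
    (hl : ∀ y w, ml * ‖y‖ ^ 2 ≤ l (y, w))
    (J : ℝ) (hJ0 : 0 ≤ J) (hJ : J ≤ MJ * ‖x₀‖ ^ 2)
    (hint : IntervalIntegrable (fun τ => l (x τ, u τ)) MeasureTheory.volume 0 Δt) :
    ml * (1 - Real.exp (-2 * Lhat * Δt)) / (2 * Lhat * MJ) * J ≤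
      ∫ τ in (0 : ℝ)..Δt, l (x τ, u τ) :=
  integral_cost_lower_bound_sampling_interval_general n m T Δt Lhat ml MJ hΔt hΔtT hLhat hml hMJ x₀
    x u hxb l hl J hJ hint
end
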